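/- Under the assumptions that p_bias(x|z) = p_ref(x|z) for all z and conditionals for distinct z have disjoint supports, the negative cross-entropy of the Bayes optimal classifier c* equals NCE(c*) = (1/(γ+1))·E_{z∼p_ref}[log(1/(γ·b(z)+1))] + (γ/(γ+1))·E_{z∼p_bias}[log(γ·b(z)/(γ·b(z)+1))], where b(z) = p_bias(z)/p_ref(z). -/

import Mathlib

open MeasureTheory

/-! On the support of the `z`-th conditional only the `z`-th term of each mixture survives, so
`c*` is constant there, equal to `1 / (γ b(z) + 1)`. Both integrands are therefore mixtures of the
normalised conditionals with constant weights, and integrate to the stated sums. -/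

section DisjointSupports

variable {X Z : Type*} [Fintype Z] {c : Z → X → ℝ}

theorem sum_mul_eq_of_disjoint_supports
    (hdisj : ∀ k k', k ≠ k' → ∀ x, 0 < c k x → c k' x = 0)
    {z : Z} {x : X} (hz : 0 < c z x) (w : Z → ℝ) :
    ∑ k, c k x * w k = c z x * w z :=
  Finset.sum_eq_single_of_mem z (Finset.mem_univ z) fun k _ hk => by
    rw [hdisj z k hk.symm x hz, zero_mul]

theorem sum_mul_mul_eq_sum_of_disjoint_supports
    (hnonneg : ∀ z x, 0 ≤ c z x) (hdisj : ∀ k k', k ≠ k' → ∀ x, 0 < c k x → c k' x = 0)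
    {a F : Z → ℝ} {φ : X → ℝ} (hφ : ∀ z x, 0 < c z x → φ x = F z) (x : X) :
    (∑ z, c z x * a z) * φ x = ∑ z, c z x * (a z * F z) := by
  by_cases h : ∃ z, 0 < c z x
  · obtain ⟨z, hz⟩ := h
    rw [sum_mul_eq_of_disjoint_supports hdisj hz, sum_mul_eq_of_disjoint_supports hdisj hz,
      hφ z x hz, mul_assoc]
  · simp only [not_exists, not_lt] at h
    have hzero : ∀ z, c z x = 0 := fun z => le_antisymm (h z) (hnonneg z x)
    simp only [hzero, zero_mul, Finset.sum_const_zero]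

variable [MeasurableSpace X] {μ : Measure X}

theorem integral_sum_mul_eq_sum (hint : ∀ z, Integrable (c z) μ)
    (hnorm : ∀ z, ∫ x, c z x ∂μ = 1) (w : Z → ℝ) :
    ∫ x, ∑ z, c z x * w z ∂μ = ∑ z, w z := by
  rw [integral_finsetSum _ fun z _ => (hint z).mul_const (w z)]
  simp only [integral_mul_const, hnorm, one_mul]

theorem integral_sum_mul_mul_eq_sum_of_disjoint_supports
    (hnonneg : ∀ z x, 0 ≤ c z x) (hdisj : ∀ k k', k ≠ k' → ∀ x, 0 < c k x → c k' x = 0)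
    (hint : ∀ z, Integrable (c z) μ) (hnorm : ∀ z, ∫ x, c z x ∂μ = 1)
    {a F : Z → ℝ} {φ : X → ℝ} (hφ : ∀ z x, 0 < c z x → φ x = F z) :
    ∫ x, (∑ z, c z x * a z) * φ x ∂μ = ∑ z, a z * F z := by
  simp_rw [sum_mul_mul_eq_sum_of_disjoint_supports hnonneg hdisj hφ]
  exact integral_sum_mul_eq_sum hint hnorm _

end DisjointSupports

theorem mul_div_mul_add_mul_mul_eq_one_div {c r q γ : ℝ} (hc : c ≠ 0) (hr : r ≠ 0) :
    c * r / (c * r + γ * (c * q)) = 1 / (γ * (q / r) + 1) := by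
  field_simp
  ring

theorem one_sub_one_div_add_one {t : ℝ} (ht : t + 1 ≠ 0) : 1 - 1 / (t + 1) = t / (t + 1) := by
  rw [one_sub_div ht, add_sub_cancel_right]

theorem optimal_nce_disjoint_supports_general
    {X : Type*} [MeasurableSpace X] (μ : Measure X)
    {Z : Type*} [Fintype Z] (γ : ℝ) (hγ : 0 < γ)
    (cb cr : Z → X → ℝ) (πb πr : Z → ℝ)
    (hcond_eq : ∀ z x, cb z x = cr z x)
    (hcb_nonneg : ∀ z x, 0 ≤ cb z x)
    (hdisj : ∀ k k', k ≠ k' → ∀ x, 0 < cb k x → cb k' x = 0)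
    (hπb_pos : ∀ z, 0 < πb z) (hπr_pos : ∀ z, 0 < πr z)
    (hint : ∀ z, Integrable (cb z) μ)
    (hnorm : ∀ z, ∫ x, cb z x ∂μ = 1)
    (pref pbias cstar : X → ℝ)
    (hpref : ∀ x, pref x = ∑ z, cr z x * πr z)
    (hpbias : ∀ x, pbias x = ∑ z, cb z x * πb z)
    (hcstar : ∀ x, cstar x = pref x / (pref x + γ * pbias x)) :
    (1 / (γ + 1)) * ∫ x, pref x * Real.log (cstar x) ∂μ +
        (γ / (γ + 1)) * ∫ x, pbias x * Real.log (1 - cstar x) ∂μ =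
      (1 / (γ + 1)) * ∑ z, πr z * Real.log (1 / (γ * (πb z / πr z) + 1)) +
        (γ / (γ + 1)) * ∑ z, πb z * Real.log
          (γ * (πb z / πr z) / (γ * (πb z / πr z) + 1)) := by
  have hpref' : ∀ x, pref x = ∑ z, cb z x * πr z := fun x => by simp only [hpref, hcond_eq]
  have hcstar_on : ∀ z x, 0 < cb z x → cstar x = 1 / (γ * (πb z / πr z) + 1) := fun z x hz => by
    rw [hcstar, hpref', hpbias, sum_mul_eq_of_disjoint_supports hdisj hz,
      sum_mul_eq_of_disjoint_supports hdisj hz]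
    exact mul_div_mul_add_mul_mul_eq_one_div hz.ne' (hπr_pos z).ne'
  have hb_pos : ∀ z, 0 < γ * (πb z / πr z) + 1 := fun z => by
    have := div_pos (hπb_pos z) (hπr_pos z)
    positivity
  have href : ∫ x, pref x * Real.log (cstar x) ∂μ =
      ∑ z, πr z * Real.log (1 / (γ * (πb z / πr z) + 1)) := by
    simp_rw [hpref']
    exact integral_sum_mul_mul_eq_sum_of_disjoint_supports hcb_nonneg hdisj hint hnorm
      fun z x hz => by rw [hcstar_on z x hz]
  have hbias : ∫ x, pbias x * Real.log (1 - cstar x) ∂μ =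
      ∑ z, πb z * Real.log (γ * (πb z / πr z) / (γ * (πb z / πr z) + 1)) := by
    simp_rw [hpbias]
    exact integral_sum_mul_mul_eq_sum_of_disjoint_supports hcb_nonneg hdisj hint hnorm
      fun z x hz => by rw [hcstar_on z x hz, one_sub_one_div_add_one (hb_pos z).ne']
  rw [href, hbias]

/-- Theorem 1 of the paper. Under matching conditionals `p_bias(x|z) = p_ref(x|z)` with
disjoint supports across distinct `z` (finite `Z`), the negative cross-entropy of the
Bayes optimal classifier equals
`(1/(γ+1))·E_{z∼p_ref}[log(1/(γ·b(z)+1))] + (γ/(γ+1))·E_{z∼p_bias}[log(γ·b(z)/(γ·b(z)+1))]`,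
where `b(z) = p_bias(z)/p_ref(z)`. -/
theorem optimal_nce_disjoint_supports
    {X : Type*} [MeasurableSpace X] (μ : Measure X)
    {Z : Type*} [Fintype Z] (γ : ℝ) (hγ : 0 < γ)
    (cb cr : Z → X → ℝ) (πb πr : Z → ℝ)
    (hcond_eq : ∀ z x, cb z x = cr z x)
    (hcb_nonneg : ∀ z x, 0 ≤ cb z x)
    (hdisj : ∀ k k', k ≠ k' → ∀ x, 0 < cb k x → cb k' x = 0)
    (hπb_pos : ∀ z, 0 < πb z) (hπr_pos : ∀ z, 0 < πr z)
    (hπb_sum : ∑ z, πb z = 1) (hπr_sum : ∑ z, πr z = 1)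
    (hint : ∀ z, Integrable (cb z) μ)
    (hnorm : ∀ z, ∫ x, cb z x ∂μ = 1)
    (pref pbias cstar : X → ℝ)
    (hpref : ∀ x, pref x = ∑ z, cr z x * πr z)
    (hpbias : ∀ x, pbias x = ∑ z, cb z x * πb z)
    (hcstar : ∀ x, cstar x = pref x / (pref x + γ * pbias x)) :
    (1 / (γ + 1)) * ∫ x, pref x * Real.log (cstar x) ∂μ +
        (γ / (γ + 1)) * ∫ x, pbias x * Real.log (1 - cstar x) ∂μ =
      (1 / (γ + 1)) * ∑ z, πr z * Real.log (1 / (γ * (πb z / πr z) + 1)) +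
        (γ / (γ + 1)) * ∑ z, πb z * Real.log
          (γ * (πb z / πr z) / (γ * (πb z / πr z) + 1)) :=
  optimal_nce_disjoint_supports_general μ γ hγ cb cr πb πr hcond_eq hcb_nonneg hdisj hπb_pos hπr_pos
    hint hnorm pref pbias cstar hpref hpbias hcstar
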